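/- Let T > 0 and let φ, ψ : [0,T] × ℝ → ℝ be continuous functions such that ψ(t,·) and φ(t,·) are strictly increasing for every t ∈ [0,T]. Let A^R, A^L ∈ I[0,T], A := A^R − A^L, y(t) := A(T) − A(t), and suppose ψ(t, y(t)) ≤ 0 ≤ φ(t, y(t)) for all t ∈ [0,T] together with the one-sided Skorokhod condition ∫_0^T φ(t, y(t)) dA^R(t) = 0. Let Ā^R, Ā^L ∈ I[0,T], Ā := Ā^R − Ā^L, ȳ(t) := Ā(T) − Ā(t), and suppose ψ(t, ȳ(t)) ≤ 0 ≤ φ(t, ȳ(t)) for all t ∈ [0,T] together with the one-sided Skorokhod condition ∫_0^T ψ(t, ȳ(t)) dĀ^L(t) = 0. Then y(t) ≤ ȳ(t) for all t ∈ [0,T]. (In particular, a reflecting function satisfying both Skorokhod conditions is dominated pointwise, in the sense of t ↦ A(T) − A(t), by any reflecting function satisfying the constraints together with only the lower Skorokhod condition, and dominates any reflecting function satisfying the constraints together with only the upper Skorokhod condition.) -/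

import Mathlib

open MeasureTheory Set

/-- `I[0,T]`: continuous nondecreasing functions on `[0,T]` vanishing at `0`,
encoded as their constant extension to all of `ℝ`. -/
structure IFun (T : ℝ) where
  toFun : ℝ → ℝ
  mono : Monotone toFun
  cont : Continuous toFun
  zero_left : ∀ t ≤ (0 : ℝ), toFun t = 0
  const_right : ∀ t, T ≤ t → toFun t = toFun T

/-- The Stieltjes function associated with an element of `I[0,T]`. -/
noncomputable def IFun.stieltjes {T : ℝ} (k : IFun T) : StieltjesFunction ℝ where
  toFun := k.toFun
  mono' := k.mono
  right_continuous' := fun _ => k.cont.continuousAt.continuousWithinAt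

/-- The Lebesgue–Stieltjes measure induced by an element of `I[0,T]`. -/
noncomputable def IFun.measure {T : ℝ} (k : IFun T) : Measure ℝ := k.stieltjes.measure

/-- The "backward remainder" `t ↦ A(T) - A(t)` of `A = A^R - A^L`. -/
noncomputable def backRem (T : ℝ) (AR AL : IFun T) : ℝ → ℝ :=
  fun t => (AR.toFun T - AL.toFun T) - (AR.toFun t - AL.toFun t)

/-!
Suppose `y(t₀) > ȳ(t₀)` for some `t₀`, and let `t₁ ∈ (t₀, T]` be the first zero of `y - ȳ`
after `t₀` (it exists since `y(T) = ȳ(T) = 0`). On `[t₀, t₁)` strict monotonicity gives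
`φ(t, y) > φ(t, ȳ) ≥ 0` and `ψ(t, ȳ) < ψ(t, y) ≤ 0`, so the two Skorokhod conditions force
`A^R` and `Ā^L` to be constant on `[t₀, t₁]`. Then `y - ȳ` can only grow from `t₀` to `t₁`,
contradicting `(y - ȳ)(t₀) > 0 = (y - ȳ)(t₁)`.
-/

lemma exists_first_zero_of_pos {f : ℝ → ℝ} {a b : ℝ} (hf : ContinuousOn f (Icc a b))
    (hab : a ≤ b) (ha : 0 < f a) (hb : f b = 0) :
    ∃ c ∈ Ioc a b, f c = 0 ∧ ∀ t ∈ Ico a c, 0 < f t := by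
  set S := Icc a b ∩ f ⁻¹' {0}
  have hS_closed : IsClosed S := hf.preimage_isClosed_of_isClosed isClosed_Icc isClosed_singleton
  have hS_bdd : BddBelow S := ⟨a, fun x hx => hx.1.1⟩
  have hc : sInf S ∈ S := hS_closed.csInf_mem ⟨b, ⟨hab, le_rfl⟩, hb⟩ hS_bdd
  have hac : a < sInf S := hc.1.1.lt_of_ne fun h => ha.ne' (h ▸ hc.2)
  refine ⟨sInf S, ⟨hac, hc.1.2⟩, hc.2, fun t ht => ?_⟩
  by_contra! hft
  obtain ⟨s, hs, hfs⟩ := intermediate_value_Icc' ht.1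
    (hf.mono (Icc_subset_Icc_right (ht.2.le.trans hc.1.2))) ⟨hft, ha.le⟩
  have hsS : s ∈ S := ⟨⟨hs.1, hs.2.trans (ht.2.le.trans hc.1.2)⟩, hfs⟩
  exact (csInf_le hS_bdd hsS).not_gt (hs.2.trans_lt ht.2)

lemma ContinuousOn.comp_graph {f : ℝ → ℝ → ℝ} {s : Set ℝ}
    (hf : ContinuousOn (fun p : ℝ × ℝ => f p.1 p.2) (s ×ˢ univ)) {y : ℝ → ℝ} (hy : Continuous y) :
    ContinuousOn (fun t => f t (y t)) s :=
  hf.comp (continuous_id.prodMk hy).continuousOn fun _ ht => ⟨ht, mem_univ _⟩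

namespace IFun

variable {T : ℝ} (k : IFun T)

lemma measure_Ioo (a b : ℝ) : k.measure (Ioo a b) = ENNReal.ofReal (k.toFun b - k.toFun a) := by
  have hleft : Function.leftLim k.toFun b = k.toFun b :=
    leftLim_eq_of_tendsto ((k.cont.tendsto b).mono_left nhdsWithin_le_nhds)
  rw [IFun.measure, StieltjesFunction.measure_Ioo]
  exact congrArg (fun x => ENNReal.ofReal (x - k.toFun a)) hleft

lemma toFun_eq_of_measure_Ioo_eq_zero {a b : ℝ} (hab : a ≤ b) (h : k.measure (Ioo a b) = 0) :
    k.toFun b = k.toFun a := by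
  rw [measure_Ioo, ENNReal.ofReal_eq_zero, sub_nonpos] at h
  exact h.antisymm (k.mono hab)

lemma toFun_eq_of_setIntegral_eq_zero {g : ℝ → ℝ} (hg : ContinuousOn g (Icc 0 T))
    (hg_nonneg : ∀ t ∈ Icc 0 T, 0 ≤ g t) (hint : ∫ t in Icc 0 T, g t ∂k.measure = 0)
    {a b : ℝ} (ha : 0 ≤ a) (hab : a ≤ b) (hb : b ≤ T) (hpos : ∀ t ∈ Ioo a b, 0 < g t) :
    k.toFun b = k.toFun a := by
  have hsupp : k.measure (Function.support g ∩ Icc 0 T) = 0 := by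
    have hint_pos := setIntegral_pos_iff_support_of_nonneg_ae (μ := k.measure)
      (ae_restrict_of_forall_mem measurableSet_Icc hg_nonneg)
      (hg.integrableOn_compact (μ := k.stieltjes.measure) isCompact_Icc)
    rw [hint, lt_self_iff_false, false_iff, not_lt, nonpos_iff_eq_zero] at hint_pos
    exact hint_pos
  refine k.toFun_eq_of_measure_Ioo_eq_zero hab (measure_mono_null (fun t ht => ?_) hsupp)
  exact ⟨(hpos t ht).ne', ha.trans ht.1.le, ht.2.le.trans hb⟩

end IFun

lemma continuous_backRem {T : ℝ} (AR AL : IFun T) : Continuous (backRem T AR AL) :=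
  continuous_const.sub (AR.cont.sub AL.cont)

lemma backRem_self {T : ℝ} (AR AL : IFun T) : backRem T AR AL T = 0 :=
  sub_self _

theorem stmt11_general (T : ℝ) (φ ψ : ℝ → ℝ → ℝ)
    (hφc : ContinuousOn (fun p : ℝ × ℝ => φ p.1 p.2) (Icc 0 T ×ˢ univ))
    (hψc : ContinuousOn (fun p : ℝ × ℝ => ψ p.1 p.2) (Icc 0 T ×ˢ univ))
    (hφm : ∀ t ∈ Icc (0 : ℝ) T, StrictMono (φ t))
    (hψm : ∀ t ∈ Icc (0 : ℝ) T, StrictMono (ψ t))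
    (AR AL BR BL : IFun T)
    (hcon : ∀ t ∈ Icc (0 : ℝ) T,
      ψ t (backRem T AR AL t) ≤ 0 ∧ 0 ≤ φ t (backRem T AR AL t))
    (hskR : (∫ t in Icc 0 T, φ t (backRem T AR AL t) ∂AR.measure) = 0)
    (hcon' : ∀ t ∈ Icc (0 : ℝ) T,
      ψ t (backRem T BR BL t) ≤ 0 ∧ 0 ≤ φ t (backRem T BR BL t))
    (hskL' : (∫ t in Icc 0 T, ψ t (backRem T BR BL t) ∂BL.measure) = 0) :
    ∀ t ∈ Icc (0 : ℝ) T, backRem T AR AL t ≤ backRem T BR BL t := by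
  intro t₀ ht₀
  by_contra! hgt
  set y := backRem T AR AL
  set y' := backRem T BR BL
  obtain ⟨t₁, ht₁, hzero, hpos⟩ := exists_first_zero_of_pos (f := fun t => y t - y' t)
    ((continuous_backRem AR AL).sub (continuous_backRem BR BL)).continuousOn ht₀.2
    (sub_pos.mpr hgt) (by simp only [y, y', backRem_self, sub_self])
  have hsub : Ioo t₀ t₁ ⊆ Icc 0 T := fun t ht => ⟨ht₀.1.trans ht.1.le, ht.2.le.trans ht₁.2⟩
  have hlt : ∀ t ∈ Ioo t₀ t₁, y' t < y t := fun t ht => sub_pos.mp (hpos t ⟨ht.1.le, ht.2⟩)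
  have hAR : AR.toFun t₁ = AR.toFun t₀ :=
    AR.toFun_eq_of_setIntegral_eq_zero (hφc.comp_graph (continuous_backRem AR AL))
      (fun t ht => (hcon t ht).2) hskR ht₀.1 ht₁.1.le ht₁.2
      fun t ht => (hcon' t (hsub ht)).2.trans_lt (hφm t (hsub ht) (hlt t ht))
  have hBL : BL.toFun t₁ = BL.toFun t₀ :=
    BL.toFun_eq_of_setIntegral_eq_zero (g := fun t => -ψ t (y' t))
      (hψc.comp_graph (continuous_backRem BR BL)).neg
      (fun t ht => neg_nonneg.mpr (hcon' t ht).1) (by rw [integral_neg, hskL', neg_zero])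
      ht₀.1 ht₁.1.le ht₁.2
      fun t ht => neg_pos.mpr ((hψm t (hsub ht) (hlt t ht)).trans_le (hcon t (hsub ht)).1)
  have hAL := AL.mono ht₁.1.le
  have hBR := BR.mono ht₁.1.le
  simp only [y, y', backRem] at hgt hzero
  linarith

/-- comparison between one-sided Skorokhod conditions: if
`y(t) = A(T) - A(t)` satisfies the constraints together with the upper Skorokhod
condition `∫ φ(t,y(t)) dA^R = 0`, and `ȳ(t) = Ā(T) - Ā(t)` satisfies the
constraints together with the lower Skorokhod condition `∫ ψ(t,ȳ(t)) dĀ^L = 0`,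
then `y(t) ≤ ȳ(t)` on `[0,T]`. -/
theorem stmt11 (T : ℝ) (hT : 0 < T) (φ ψ : ℝ → ℝ → ℝ)
    (hφc : ContinuousOn (fun p : ℝ × ℝ => φ p.1 p.2) (Icc 0 T ×ˢ univ))
    (hψc : ContinuousOn (fun p : ℝ × ℝ => ψ p.1 p.2) (Icc 0 T ×ˢ univ))
    (hφm : ∀ t ∈ Icc (0 : ℝ) T, StrictMono (φ t))
    (hψm : ∀ t ∈ Icc (0 : ℝ) T, StrictMono (ψ t))
    (AR AL BR BL : IFun T)
    (hcon : ∀ t ∈ Icc (0 : ℝ) T,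
      ψ t (backRem T AR AL t) ≤ 0 ∧ 0 ≤ φ t (backRem T AR AL t))
    (hskR : (∫ t in Icc 0 T, φ t (backRem T AR AL t) ∂AR.measure) = 0)
    (hcon' : ∀ t ∈ Icc (0 : ℝ) T,
      ψ t (backRem T BR BL t) ≤ 0 ∧ 0 ≤ φ t (backRem T BR BL t))
    (hskL' : (∫ t in Icc 0 T, ψ t (backRem T BR BL t) ∂BL.measure) = 0) :
    ∀ t ∈ Icc (0 : ℝ) T, backRem T AR AL t ≤ backRem T BR BL t :=
  stmt11_general T φ ψ hφc hψc hφm hψm AR AL BR BL hcon hskR hcon' hskL'
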